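/- arXiv:2509.25989 — 3 statements merged into one kernel-verified Lean document; each statement's English description precedes it below -/
import Mathlib

section
/- For a (K,k,2) covering design (a family of k-element subsets of a K-element set such that every 2-element subset is contained in some block), the number of blocks is at least ⌈(K/k)·⌈(K-1)/(k-1)⌉⌉. -/
/-!
Fix a point `x`. Every other point shares a block with `x`, and a block through `x` covers at most
`k - 1` further points, so `x` lies in at least `r = ⌈(K-1)/(k-1)⌉` blocks. Counting incidences
between points and blocks then gives `K * r ≤ k * #B`.
-/

open Finset

namespace Finset

variable {α : Type*} [DecidableEq α] {B : Finset (Finset α)} {k : ℕ}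

theorem card_sub_one_le_card_filter_mem_mul [Fintype α] (hB : ∀ b ∈ B, #b ≤ k)
    (hcover : ∀ x y, x ≠ y → ∃ b ∈ B, x ∈ b ∧ y ∈ b) (x : α) :
    Fintype.card α - 1 ≤ #{b ∈ B | x ∈ b} * (k - 1) := by
  have hsub : univ.erase x ⊆ {b ∈ B | x ∈ b}.biUnion (·.erase x) := by
    intro y hy
    have hyx := ne_of_mem_erase hy
    obtain ⟨b, hb, hxb, hyb⟩ := hcover x y hyx.symm
    exact mem_biUnion.2 ⟨b, mem_filter.2 ⟨hb, hxb⟩, mem_erase.2 ⟨hyx, hyb⟩⟩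
  calc Fintype.card α - 1 = #(univ.erase x) := by rw [card_erase_of_mem (mem_univ x), card_univ]
    _ ≤ #({b ∈ B | x ∈ b}.biUnion (·.erase x)) := card_le_card hsub
    _ ≤ ∑ b ∈ {b ∈ B | x ∈ b}, #(b.erase x) := card_biUnion_le
    _ ≤ #{b ∈ B | x ∈ b} * (k - 1) := by
      refine sum_le_card_nsmul _ _ _ fun b hb => ?_
      rw [mem_filter] at hb
      rw [card_erase_of_mem hb.2]
      exact Nat.sub_le_sub_right (hB b hb.1) 1

theorem card_mul_le_mul_card_of_le_card_filter_mem [Fintype α] (hB : ∀ b ∈ B, #b ≤ k) {r : ℕ}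
    (hr : ∀ x, r ≤ #{b ∈ B | x ∈ b}) : Fintype.card α * r ≤ k * #B :=
  calc Fintype.card α * r ≤ ∑ b ∈ B, #b := le_sum_card hr
    _ ≤ #B * k := sum_le_card_nsmul _ _ _ hB
    _ = k * #B := mul_comm _ _

end Finset

theorem Int.ceil_sub_one_div_sub_one_le {n k d : ℕ} (hk : 2 ≤ k) (h : n - 1 ≤ d * (k - 1)) :
    ⌈((n : ℚ) - 1) / ((k : ℚ) - 1)⌉ ≤ d := by
  have hk' : (1 : ℚ) < k := by exact_mod_cast hk
  rw [Int.ceil_le, div_le_iff₀ (by linarith), Int.cast_natCast]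
  have : (n : ℚ) ≤ d * ((k - 1 : ℕ) : ℚ) + 1 := by exact_mod_cast (show n ≤ d * (k - 1) + 1 by omega)
  push_cast [show 1 ≤ k by omega] at this
  linarith

theorem schonheim_bound_t2_general (K k : ℕ) (hk : 2 ≤ k)
    (B : Finset (Finset (Fin K)))
    (hblocks : ∀ b ∈ B, b.card = k)
    (hcover : ∀ T : Finset (Fin K), T.card = 2 → ∃ b ∈ B, T ⊆ b) :
    ⌈(K : ℚ) / k * (⌈((K : ℚ) - 1) / ((k : ℚ) - 1)⌉ : ℚ)⌉ ≤ (B.card : ℤ) := by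
  set r : ℤ := ⌈((K : ℚ) - 1) / ((k : ℚ) - 1)⌉
  have hB : ∀ b ∈ B, #b ≤ k := fun b hb => (hblocks b hb).le
  have hpairs : ∀ x y : Fin K, x ≠ y → ∃ b ∈ B, x ∈ b ∧ y ∈ b := fun x y hxy => by
    simpa [insert_subset_iff] using hcover {x, y} (card_pair_eq_two_iff.2 hxy)
  have hdeg : ∀ x, r.toNat ≤ #{b ∈ B | x ∈ b} := fun x => by
    have := card_sub_one_le_card_filter_mem_mul hB hpairs x
    rw [Fintype.card_fin] at this
    exact Int.toNat_le.2 (Int.ceil_sub_one_div_sub_one_le hk this)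
  have hcount : (K : ℤ) * r ≤ k * #B := by
    have := card_mul_le_mul_card_of_le_card_filter_mem hB hdeg
    rw [Fintype.card_fin] at this
    calc (K : ℤ) * r ≤ K * r.toNat := by gcongr; exact Int.self_le_toNat r
      _ ≤ k * #B := by exact_mod_cast this
  have hk0 : (0 : ℚ) < k := by exact_mod_cast (by omega : 0 < k)
  rw [Int.ceil_le, div_mul_eq_mul_div, div_le_iff₀ hk0, mul_comm _ (k : ℚ)]
  exact_mod_cast hcount

/-- Schönheim lower bound for `t = 2`: any `(K,k,2)` covering design has at
least `⌈(K/k)·⌈(K-1)/(k-1)⌉⌉` blocks. -/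
theorem schonheim_bound_t2 (K k : ℕ) (hk : 2 ≤ k) (hK : k ≤ K)
    (B : Finset (Finset (Fin K)))
    (hblocks : ∀ b ∈ B, b.card = k)
    (hcover : ∀ T : Finset (Fin K), T.card = 2 → ∃ b ∈ B, T ⊆ b) :
    ⌈(K : ℚ) / k * (⌈((K : ℚ) - 1) / ((k : ℚ) - 1)⌉ : ℚ)⌉ ≤ (B.card : ℤ) :=
  schonheim_bound_t2_general K k hk B hblocks hcover
end

section
/- If V₁, …, V_{n+1} are exchangeable and almost surely distinct, then the rank of V_{n+1} among the n+1 values is uniformly distributed on {1, …, n+1}. -/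
/-!
By exchangeability, swapping the last coordinate with coordinate `k` shows that the event
"coordinate `k` has `c` values below it" has the same probability for every `k`. Almost surely
the values are distinct, and then exactly one coordinate has `c` values below it, so these
`n + 1` equiprobable events partition the sample space up to a null set.
-/

open MeasureTheory ENNReal

section

variable {ι α : Type*}

/-- `1 + countBelow x k` is the rank of `x k` among the coordinates of `x`. -/
def countBelow [Fintype ι] [LinearOrder α] (x : ι → α) (k : ι) : ℕ :=
  (Finset.univ.filter fun j => x j < x k).card

def Exchangeable {Ω : Type*} [MeasurableSpace Ω] [MeasurableSpace α]
    (μ : Measure Ω) (V : ι → Ω → α) : Prop :=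
  ∀ σ : Equiv.Perm ι, μ.map (fun ω i => V (σ i) ω) = μ.map (fun ω i => V i ω)

section Combinatorics

variable [Fintype ι] [LinearOrder α]

theorem countBelow_comp_perm (x : ι → α) (σ : Equiv.Perm ι) (k : ι) :
    countBelow (x ∘ σ) k = countBelow x (σ k) := by
  simp only [countBelow, Finset.card_filter, Function.comp_apply]
  exact Equiv.sum_comp σ fun j => if x j < x (σ k) then 1 else 0

theorem countBelow_lt_card (x : ι → α) (k : ι) : countBelow x k < Fintype.card ι :=
  Finset.card_lt_univ_of_notMem (x := k) (by simp)

theorem countBelow_lt_countBelow {x : ι → α} {k k' : ι} (h : x k < x k') :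
    countBelow x k < countBelow x k' :=
  Finset.card_lt_card <| (Finset.ssubset_iff_of_subset fun j hj => by
    simp only [Finset.mem_filter] at hj ⊢; exact ⟨hj.1, hj.2.trans h⟩).2 ⟨k, by simp [h]⟩

theorem countBelow_injective {x : ι → α} (hx : Function.Injective x) :
    Function.Injective (countBelow x) := by
  intro k k' h
  rcases lt_trichotomy (x k) (x k') with hlt | heq | hgt
  · exact absurd h (countBelow_lt_countBelow hlt).ne
  · exact hx heq
  · exact absurd h (countBelow_lt_countBelow hgt).ne'

theorem existsUnique_countBelow_eq {x : ι → α} (hx : Function.Injective x) {c : ℕ}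
    (hc : c < Fintype.card ι) : ∃! k, countBelow x k = c := by
  let f : ι → Fin (Fintype.card ι) := fun k => ⟨countBelow x k, countBelow_lt_card x k⟩
  have hf : Function.Bijective f :=
    (Fintype.bijective_iff_injective_and_card f).2
      ⟨fun k k' h => countBelow_injective hx (Fin.val_eq_of_eq h), by simp⟩
  simpa [f, Fin.ext_iff] using hf.existsUnique ⟨c, hc⟩

theorem countBelow_last {n : ℕ} (x : Fin (n + 1) → α) :
    countBelow x (Fin.last n) =
      (Finset.univ.filter fun i : Fin n => x i.castSucc < x (Fin.last n)).card := by
  rw [countBelow, Finset.card_filter, Finset.card_filter, Fin.sum_univ_castSucc]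
  simp

end Combinatorics

section Probability

variable {Ω : Type*} [MeasurableSpace Ω] {μ : Measure Ω}

theorem sum_measure_eq_one_of_ae_existsUnique [IsProbabilityMeasure μ] [Fintype ι]
    {E : ι → Set Ω} (hE : ∀ k, MeasurableSet (E k)) (h : ∀ᵐ ω ∂μ, ∃! k, ω ∈ E k) :
    ∑ k, μ (E k) = 1 :=
  calc ∑ k, μ (E k) = ∑ k, ∫⁻ ω, (E k).indicator 1 ω ∂μ := by
        simp only [lintegral_indicator_one (hE _)]
    _ = ∫⁻ ω, ∑ k, (E k).indicator 1 ω ∂μ :=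
        (lintegral_finsetSum _ fun k _ => measurable_one.indicator (hE k)).symm
    _ = ∫⁻ _, 1 ∂μ := lintegral_congr_ae <| h.mono fun ω ⟨k, hk, huniq⟩ => by
        change ∑ j, (E j).indicator 1 ω = 1
        rw [Finset.sum_eq_single k (fun j _ hj => Set.indicator_of_notMem
          (fun hj' => hj (huniq j hj')) _) (by simp)]
        simp [hk]
    _ = 1 := by simp

theorem ae_injective_of_measure_eq_zero [Countable ι] {V : ι → Ω → α}
    (h : ∀ i j, i ≠ j → μ {ω | V i ω = V j ω} = 0) :
    ∀ᵐ ω ∂μ, Function.Injective fun i => V i ω := by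
  have hij : ∀ i j, ∀ᵐ ω ∂μ, V i ω = V j ω → i = j := fun i j => by
    by_cases hne : i = j
    · simp [hne]
    · exact (measure_eq_zero_iff_ae_notMem.1 (h i j hne)).mono fun ω hω heq => absurd heq hω
  filter_upwards [ae_all_iff.2 fun i => ae_all_iff.2 (hij i)] with ω hω i j using hω i j

variable [Fintype ι] [LinearOrder α] [TopologicalSpace α] [OrderClosedTopology α]
  [SecondCountableTopology α] [MeasurableSpace α] [OpensMeasurableSpace α]

theorem measurable_countBelow (k : ι) : Measurable fun x : ι → α => countBelow x k := by
  simp only [countBelow, Finset.card_filter]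
  exact Finset.measurable_sum _ fun j _ => Measurable.ite
    (measurableSet_lt (measurable_pi_apply j) (measurable_pi_apply k))
    measurable_const measurable_const

theorem Exchangeable.measure_countBelow_eq [DecidableEq ι] {V : ι → Ω → α}
    (hexch : Exchangeable μ V) (hmeas : ∀ i, Measurable (V i)) (c : ℕ) (k k' : ι) :
    μ {ω | countBelow (fun i => V i ω) k = c} = μ {ω | countBelow (fun i => V i ω) k' = c} := by
  have hS : MeasurableSet {x : ι → α | countBelow x k' = c} :=
    measurable_countBelow k' (measurableSet_singleton c)
  have key := congrArg (· {x | countBelow x k' = c}) (hexch (Equiv.swap k' k))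
  simp only [Measure.map_apply (measurable_pi_lambda _ fun i => hmeas _) hS] at key
  convert key using 2
  · ext ω
    change countBelow (fun i => V i ω) k = c ↔
      countBelow ((fun i => V i ω) ∘ Equiv.swap k' k) k' = c
    rw [countBelow_comp_perm, Equiv.swap_apply_left]
  · rfl

end Probability

end

/-- If `V 0, …, V n` are exchangeable and almost surely pairwise distinct, then
the rank of the last variable among all `n+1` values is uniform on `{1,…,n+1}`. -/
theorem conformal_rank_uniform
    {Ω : Type*} [MeasurableSpace Ω] (ℙ : Measure Ω) [IsProbabilityMeasure ℙ]
    (n : ℕ) (V : Fin (n + 1) → Ω → ℝ) (hmeas : ∀ i, Measurable (V i))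
    (hexch : ∀ σ : Equiv.Perm (Fin (n + 1)),
      Measure.map (fun ω => fun i => V (σ i) ω) ℙ
        = Measure.map (fun ω => fun i => V i ω) ℙ)
    (hdistinct : ∀ i j : Fin (n + 1), i ≠ j → ℙ {ω | V i ω = V j ω} = 0) :
    ∀ r ∈ Finset.Icc 1 (n + 1),
      ℙ {ω | 1 + (Finset.univ.filter
          (fun i : Fin n => V i.castSucc ω < V (Fin.last n) ω)).card = r}
        = (n + 1 : ℝ≥0∞)⁻¹ := by
  intro r hr
  obtain ⟨hr1, hrn⟩ := Finset.mem_Icc.1 hr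
  let E k := {ω | countBelow (fun i => V i ω) k = r - 1}
  have hE : ∀ k, MeasurableSet (E k) := fun k =>
    (measurable_countBelow k).comp (measurable_pi_lambda _ hmeas) (measurableSet_singleton _)
  have hpartition : ∑ k, ℙ (E k) = 1 :=
    sum_measure_eq_one_of_ae_existsUnique hE <|
      (ae_injective_of_measure_eq_zero hdistinct).mono fun ω hω =>
        existsUnique_countBelow_eq hω (by rw [Fintype.card_fin]; omega)
  have hlast : ℙ {ω | 1 + (Finset.univ.filter
      (fun i : Fin n => V i.castSucc ω < V (Fin.last n) ω)).card = r} = ℙ (E (Fin.last n)) := by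
    congr 1
    ext ω
    simp only [E, Set.mem_ofPred_eq, countBelow_last]
    omega
  have hequal : ∀ k, ℙ (E k) = ℙ (E (Fin.last n)) := fun k =>
    Exchangeable.measure_countBelow_eq (V := V) hexch hmeas _ k (Fin.last n)
  rw [Finset.sum_congr rfl fun k _ => hequal k, Finset.sum_const, Finset.card_univ,
    Fintype.card_fin, nsmul_eq_mul] at hpartition
  rw [hlast]
  refine ENNReal.eq_inv_of_mul_eq_one_left ?_
  rw [mul_comm]
  exact_mod_cast hpartition
end

section
/- The Schönheim recursion: C(K,k,t) ≥ ⌈(K/k) · C(K-1, k-1, t-1)⌉, where C(K,k,t) denotes the minimum number of blocks in a (K,k,t) covering design. -/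
/-!
Take a minimum covering design `B`. For each point `x`, deleting `x` from the blocks through it
gives a `(K-1, k-1, t-1)` covering design on the other points (a `(t-1)`-set together with `x` is a
`t`-set, hence lies in a block through `x`), so `x` lies in at least `C(K-1, k-1, t-1)` blocks.
Counting point-block incidences then gives `K · C(K-1, k-1, t-1) ≤ k · |B|`.
-/

/-- `C(K,k,t)`: the minimum number of blocks of a `(K,k,t)` covering design,
i.e. a family of `k`-subsets of `Fin K` covering every `t`-subset. -/
noncomputable def coveringNumber (K k t : ℕ) : ℕ :=
  sInf {n : ℕ | ∃ B : Finset (Finset (Fin K)), B.card = n ∧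
    (∀ b ∈ B, b.card = k) ∧
    ∀ T : Finset (Fin K), T.card = t → ∃ b ∈ B, T ⊆ b}

open Finset

section CoveringDesign

variable {α β : Type*} {k t : ℕ} {B : Finset (Finset α)}

def IsCoveringDesign (k t : ℕ) (B : Finset (Finset α)) : Prop :=
  (∀ b ∈ B, #b = k) ∧ ∀ T : Finset α, #T = t → ∃ b ∈ B, T ⊆ b

theorem isCoveringDesign_powersetCard [Fintype α] (htk : t ≤ k) (hk : k ≤ Fintype.card α) :
    IsCoveringDesign k t (univ.powersetCard k : Finset (Finset α)) := by
  refine ⟨fun b hb ↦ (mem_powersetCard.mp hb).2, fun T hT ↦ ?_⟩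
  obtain ⟨b, hTb, -, hb⟩ := exists_subsuperset_card_eq (subset_univ T) (hT ▸ htk) (by simpa)
  exact ⟨b, mem_powersetCard.mpr ⟨subset_univ b, hb⟩, hTb⟩

theorem IsCoveringDesign.map_equiv (hB : IsCoveringDesign k t B) (e : α ≃ β) :
    IsCoveringDesign k t (B.map e.finsetCongr.toEmbedding) := by
  refine ⟨fun b' hb' ↦ ?_, fun T hT ↦ ?_⟩
  · obtain ⟨b, hb, rfl⟩ := mem_map.mp hb'
    simpa using hB.1 b hb
  · obtain ⟨b, hb, hTb⟩ := hB.2 (T.map e.symm.toEmbedding) (by simpa using hT)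
    refine ⟨e.finsetCongr b, mem_map_of_mem _ hb, fun y hy ↦ ?_⟩
    simpa [mem_map_equiv] using hTb (mem_map_equiv.mpr (by simpa using hy))

variable [DecidableEq α]

def derivedDesign (B : Finset (Finset α)) (x : α) : Finset (Finset {y // y ≠ x}) :=
  {b ∈ B | x ∈ b}.image (·.subtype (· ≠ x))

theorem card_derivedDesign_le (B : Finset (Finset α)) (x : α) :
    #(derivedDesign B x) ≤ #{b ∈ B | x ∈ b} :=
  card_image_le

theorem IsCoveringDesign.derivedDesign (hB : IsCoveringDesign k t B) (ht : 1 ≤ t) (x : α) :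
    IsCoveringDesign (k - 1) (t - 1) (derivedDesign B x) := by
  refine ⟨fun b' hb' ↦ ?_, fun T hT ↦ ?_⟩
  · obtain ⟨b, hb, rfl⟩ := mem_image.mp hb'
    obtain ⟨hbB, hxb⟩ := mem_filter.mp hb
    rw [card_subtype, filter_ne', card_erase_of_mem hxb, hB.1 b hbB]
  · set S := insert x (T.map (Function.Embedding.subtype _))
    have hxS : x ∉ T.map (Function.Embedding.subtype _) := by simp
    obtain ⟨b, hbB, hSb⟩ := hB.2 S (by rw [card_insert_of_notMem hxS, card_map, hT]; omega)
    refine ⟨b.subtype (· ≠ x), mem_image_of_mem _ (mem_filter.mpr ⟨hbB, hSb (mem_insert_self x _)⟩),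
      fun y hy ↦ mem_subtype.mpr (hSb (mem_insert_of_mem (mem_map_of_mem _ hy)))⟩

end CoveringDesign

theorem coveringNumber_le_card {α : Type*} [Fintype α] {K k t : ℕ} {B : Finset (Finset α)}
    (hα : Fintype.card α = K) (hB : IsCoveringDesign k t B) : coveringNumber K k t ≤ #B := by
  have hB' := hB.map_equiv (Fintype.equivFinOfCardEq hα)
  exact card_map (s := B) _ ▸ Nat.sInf_le ⟨_, rfl, hB'.1, hB'.2⟩

theorem exists_isCoveringDesign_card_eq_coveringNumber {K k t : ℕ} (htk : t ≤ k) (hkK : k ≤ K) :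
    ∃ B : Finset (Finset (Fin K)), IsCoveringDesign k t B ∧ #B = coveringNumber K k t := by
  have hU := isCoveringDesign_powersetCard (α := Fin K) htk (by simpa using hkK)
  obtain ⟨B, hcard, hB⟩ :=
    Nat.sInf_mem (s := {n | ∃ B : Finset (Finset (Fin K)), #B = n ∧ IsCoveringDesign k t B})
      ⟨_, univ.powersetCard k, rfl, hU⟩
  exact ⟨B, hB, hcard⟩

theorem coveringNumber_pred_le_card_filter_mem {K k t : ℕ} {B : Finset (Finset (Fin K))}
    (hB : IsCoveringDesign k t B) (ht : 1 ≤ t) (x : Fin K) :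
    coveringNumber (K - 1) (k - 1) (t - 1) ≤ #{b ∈ B | x ∈ b} :=
  (coveringNumber_le_card (by simp [Fintype.card_subtype_compl]) (hB.derivedDesign ht x)).trans
    (card_derivedDesign_le B x)

theorem mul_coveringNumber_pred_le_mul_card {K k t : ℕ} {B : Finset (Finset (Fin K))}
    (hB : IsCoveringDesign k t B) (ht : 1 ≤ t) :
    K * coveringNumber (K - 1) (k - 1) (t - 1) ≤ k * #B :=
  calc K * coveringNumber (K - 1) (k - 1) (t - 1)
      = Fintype.card (Fin K) * coveringNumber (K - 1) (k - 1) (t - 1) := by simp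
    _ ≤ ∑ b ∈ B, #b := le_sum_card (coveringNumber_pred_le_card_filter_mem hB ht)
    _ = k * #B := by rw [sum_congr rfl hB.1, sum_const, smul_eq_mul, mul_comm]

/-- Schönheim recursion: `C(K,k,t) ≥ ⌈(K/k) · C(K-1,k-1,t-1)⌉`. -/
theorem schonheim_recursion (K k t : ℕ) (ht : 1 ≤ t) (hk : t ≤ k) (hK : k ≤ K) :
    ⌈(K : ℚ) / k * (coveringNumber (K - 1) (k - 1) (t - 1) : ℚ)⌉₊
      ≤ coveringNumber K k t := by
  obtain ⟨B, hB, hcard⟩ := exists_isCoveringDesign_card_eq_coveringNumber hk hK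
  have hk0 : (0 : ℚ) < k := by exact_mod_cast (by omega : 0 < k)
  have hcount := mul_coveringNumber_pred_le_mul_card hB ht
  rw [Nat.ceil_le, ← hcard, div_mul_eq_mul_div, div_le_iff₀ hk0, mul_comm _ (k : ℚ)]
  exact_mod_cast hcount
end
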